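/- For i = 1, 2, let aᵢ, bᵢ, eᵢ, fᵢ be rational numbers with aᵢ ≠ 0 and bᵢ > 0 such that exp(Nᵢ) has integer entries, where Nᵢ = N(aᵢ,bᵢ,eᵢ,fᵢ); let πᵢ ∈ ℂ and vᵢ = (1, 0, fᵢ/(2aᵢ), πᵢ)ᵀ. Assume b₁ ≠ b₂ or π₁ − π₂ ∉ ℚ. Then there exist no integer 4×4 matrix g with gᵀJg = J, complex number c, and nonzero complex number μ such that g·N₁ = N₂·g and g·v₁ = μ·exp(c·N₂)·v₂. (This is the matrix form of the statement that the nilpotent orbits at two maximally unipotent monodromy points with distinct invariants b, or with π₁ − π₂ irrational, are not identified by any element of G_ℤ = Sp(2,ℤ).) -/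

import Mathlib

/-!
Intertwining `N₁` with `N₂` forces `g` to preserve the monodromy weight filtration, i.e. to be
lower triangular, and the diagonal of a lower-triangular integral symplectic matrix is `±1` with
`g₀₀ = g₃₃` and `g₁₁ = g₂₂`. The `(2,1)` entry of `g N₁ = N₂ g` then reads `b₁ = b₂`.
Since `N₂⁴ = 0`, `exp (c N₂) v₂ = (1, c a₂, *, π₂ + c f₂ / 2 - c³ a₂² b₂ / 6)`, so the first, second
and last coordinates of `g v₁ = μ exp (c N₂) v₂` give `μ = g₀₀`, `c ∈ ℚ` and `π₁ - π₂ ∈ ℚ`.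
-/

open Matrix

/-- The symplectic form matrix `J`. -/
def Jmat (R : Type*) [Zero R] [One R] [Neg R] : Matrix (Fin 4) (Fin 4) R :=
  !![0, 0, 0, 1;
     0, 0, 1, 0;
     0, -1, 0, 0;
     -1, 0, 0, 0]

/-- The normalized nilpotent matrix `N(a,b,e,f)`. -/
def Nmat {R : Type*} [Zero R] [Neg R] (a b e f : R) : Matrix (Fin 4) (Fin 4) R :=
  !![0, 0, 0, 0;
     a, 0, 0, 0;
     e, b, 0, 0;
     f, e, -a, 0]

theorem Nmat_map {R S : Type*} [Zero R] [Neg R] [Zero S] [Neg S] (φ : R → S) (h0 : φ 0 = 0)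
    (hneg : ∀ r, φ (-r) = -φ r) (a b e f : R) :
    (Nmat a b e f).map φ = Nmat (φ a) (φ b) (φ e) (φ f) := by
  ext i j
  fin_cases i <;> fin_cases j <;> simp [Nmat, h0, hneg]

section Intertwiner

variable {R : Type*} [CommRing R] {a₁ b₁ e₁ f₁ a₂ b₂ e₂ f₂ : R} {g : Matrix (Fin 4) (Fin 4) R}

theorem isLowerTriangular_of_mul_Nmat_eq_Nmat_mul [NoZeroDivisors R]
    (ha₁ : a₁ ≠ 0) (hb₁ : b₁ ≠ 0) (ha₂ : a₂ ≠ 0)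
    (h : g * Nmat a₁ b₁ e₁ f₁ = Nmat a₂ b₂ e₂ f₂ * g) : g.IsLowerTriangular := by
  have e02 := congr_fun₂ h 0 2
  have e01 := congr_fun₂ h 0 1
  have e00 := congr_fun₂ h 0 0
  have e12 := congr_fun₂ h 1 2
  have e11 := congr_fun₂ h 1 1
  have e33 := congr_fun₂ h 3 3
  simp only [Nmat, Fin.isValue, mul_apply, of_apply, cons_val', cons_val, cons_val_fin_one,
    Fin.sum_univ_four, cons_val_zero, mul_zero, cons_val_one, add_zero, mul_neg, zero_add, zero_mul,
    neg_eq_zero, mul_eq_zero, ha₁, or_false, neg_mul] at e02 e01 e00 e12 e11 e33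
  have g03 : g 0 3 = 0 := e02
  have g02 : g 0 2 = 0 := by simpa [g03, hb₁] using e01
  have g01 : g 0 1 = 0 := by simpa [g03, g02, ha₁] using e00
  have g13 : g 1 3 = 0 := by simpa [g02, ha₁] using e12
  have g12 : g 1 2 = 0 := by simpa [g13, g01, hb₁] using e11
  have g23 : g 2 3 = 0 := by simpa [g03, g13, ha₂] using e33.symm
  intro i j hij
  fin_cases i <;> fin_cases j <;> first | assumption | exact absurd hij (by decide)

theorem Matrix.IsLowerTriangular.mul_b_eq_b_mul_of_mul_Nmat_eq_Nmat_mul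
    (hg : g.IsLowerTriangular) (h : g * Nmat a₁ b₁ e₁ f₁ = Nmat a₂ b₂ e₂ f₂ * g) :
    g 2 2 * b₁ = b₂ * g 1 1 := by
  have upper : ∀ i j : Fin 4, i < j → g i j = 0 := fun _ _ hij => hg hij
  simpa [Nmat, mul_apply, Fin.sum_univ_four, upper] using congr_fun₂ h 2 1

theorem Matrix.IsLowerTriangular.mul_diag_eq_one_of_transpose_mul_Jmat_mul
    (hg : g.IsLowerTriangular) (hs : gᵀ * Jmat R * g = Jmat R) :
    g 0 0 * g 3 3 = 1 ∧ g 1 1 * g 2 2 = 1 := by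
  have upper : ∀ i j : Fin 4, i < j → g i j = 0 := fun _ _ hij => hg hij
  simpa [Jmat, mul_apply, Fin.sum_univ_four, upper] using
    And.intro (congr_fun₂ hs 0 3) (congr_fun₂ hs 1 2)

end Intertwiner

theorem exp_eq_sum_range_of_pow_eq_zero (𝕂 : Type*) {𝔸 : Type*} [Field 𝕂] [CharZero 𝕂] [Ring 𝔸]
    [Algebra 𝕂 𝔸] [TopologicalSpace 𝔸] [IsTopologicalRing 𝔸] [T2Space 𝔸] {x : 𝔸} {n : ℕ}
    (h : x ^ n = 0) : NormedSpace.exp x = ∑ k ∈ Finset.range n, (k.factorial⁻¹ : 𝕂) • x ^ k := by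
  rw [NormedSpace.exp_eq_tsum 𝕂]
  exact tsum_eq_sum fun k hk => by
    rw [pow_eq_zero_of_le (not_lt.1 (Finset.mem_range.not.1 hk)) h, smul_zero]

theorem Nmat_pow_four_eq_zero {R : Type*} [CommRing R] (a b e f : R) : Nmat a b e f ^ 4 = 0 := by
  ext i j
  fin_cases i <;> fin_cases j <;> simp [Nmat, pow_succ, mul_apply, Fin.sum_univ_four]

theorem exp_smul_Nmat_mulVec {𝕂 : Type*} [Field 𝕂] [CharZero 𝕂] [TopologicalSpace 𝕂]
    [IsTopologicalRing 𝕂] [T2Space 𝕂] (a b e f c x π : 𝕂) :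
    NormedSpace.exp (c • Nmat a b e f) *ᵥ ![1, 0, x, π]
      = ![1, c * a, x + c * e + c ^ 2 * a * b / 2,
          π + c * (f - a * x) - c ^ 3 * a ^ 2 * b / 6] := by
  rw [exp_eq_sum_range_of_pow_eq_zero 𝕂 (by rw [smul_pow, Nmat_pow_four_eq_zero, smul_zero])]
  ext i
  fin_cases i <;>
    simp [Finset.sum_range_succ, Nmat, pow_succ, mulVec, dotProduct, Fin.sum_univ_four] <;> ring

theorem exists_ratCast_eq_sub_of_mulVec_eq {a b e f x : ℚ} (ha : a ≠ 0)
    {g : Matrix (Fin 4) (Fin 4) ℤ} (hg : g.IsLowerTriangular) (hu : g 0 0 * g 3 3 = 1)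
    {c μ π₁ π₂ : ℂ}
    (h : g.map ((↑) : ℤ → ℂ) *ᵥ ![1, 0, (x : ℂ), π₁] = μ • NormedSpace.exp
      (c • (Nmat a b e f).map ((↑) : ℚ → ℂ)) *ᵥ ![1, 0, ((f / (2 * a) : ℚ) : ℂ), π₂]) :
    ∃ q : ℚ, π₁ - π₂ = q := by
  rw [Nmat_map _ Rat.cast_zero Rat.cast_neg, exp_smul_Nmat_mulVec] at h
  have upper : ∀ i j : Fin 4, i < j → g i j = 0 := fun _ _ hij => hg hij
  have h0 := congr_fun h 0
  have h1 := congr_fun h 1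
  have h3 := congr_fun h 3
  simp only [mulVec, dotProduct, Fin.isValue, map_apply, Fin.sum_univ_four, cons_val_zero,
    mul_one, zero_lt_one, upper, Int.cast_zero, cons_val_one, mul_zero, add_zero, Fin.reduceLT,
    cons_val, zero_mul, Nat.succ_eq_add_one, Nat.reduceAdd, Rat.cast_div, Rat.cast_mul,
    Rat.cast_ofNat, Pi.smul_apply, smul_eq_mul] at h0 h1 h3
  subst h0
  have hg33 : g 3 3 = g 0 0 := (Int.eq_of_mul_eq_one hu).symm
  have hu' : (g 0 0 : ℂ) * g 0 0 = 1 := by exact_mod_cast hg33 ▸ hu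
  have ha' : (a : ℂ) ≠ 0 := by exact_mod_cast ha
  have hc : c = ((g 0 0 * g 1 0 / a : ℚ) : ℂ) := by
    push_cast
    calc c = (g 0 0 * g 0 0) * (c * a) / a := by rw [hu', one_mul, mul_div_cancel_right₀ _ ha']
      _ = g 0 0 * g 1 0 / a := by rw [h1]; ring
  have hf : (f : ℂ) - a * (f / (2 * a)) = f / 2 := by field_simp; ring
  obtain ⟨q, rfl⟩ : ∃ q : ℚ, c = q := ⟨_, hc⟩
  rw [hf, hg33] at h3
  refine ⟨q * f / 2 - q ^ 3 * a ^ 2 * b / 6 - g 0 0 * (g 3 0 + g 3 2 * x), ?_⟩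
  push_cast
  -- multiply the last coordinate by `g₀₀ = g₀₀⁻¹`
  linear_combination g 0 0 * h3 + (π₂ - π₁ + q * f / 2 - q ^ 3 * a ^ 2 * b / 6) * hu'

theorem stmt11_general (a₁ b₁ e₁ f₁ a₂ b₂ e₂ f₂ : ℚ) (π₁ π₂ : ℂ)
    (ha₁ : a₁ ≠ 0) (ha₂ : a₂ ≠ 0) (hb₁ : 0 < b₁)
    (hne : b₁ ≠ b₂ ∨ ∀ q : ℚ, π₁ - π₂ ≠ (q : ℂ)) :
    ¬ ∃ (g : Matrix (Fin 4) (Fin 4) ℤ) (c μ : ℂ),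
        μ ≠ 0 ∧
        gᵀ * Jmat ℤ * g = Jmat ℤ ∧
        g.map ((↑) : ℤ → ℚ) * Nmat a₁ b₁ e₁ f₁
          = Nmat a₂ b₂ e₂ f₂ * g.map ((↑) : ℤ → ℚ) ∧
        (g.map ((↑) : ℤ → ℂ)).mulVec ![1, 0, ((f₁ / (2 * a₁) : ℚ) : ℂ), π₁]
          = μ • (NormedSpace.exp
              (c • (Nmat a₂ b₂ e₂ f₂).map ((↑) : ℚ → ℂ))).mulVec
              ![1, 0, ((f₂ / (2 * a₂) : ℚ) : ℂ), π₂] := by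
  rintro ⟨g, c, μ, -, hsymp, hcomm, hvec⟩
  have hlowℚ := isLowerTriangular_of_mul_Nmat_eq_Nmat_mul ha₁ hb₁.ne' ha₂ hcomm
  have hlow : g.IsLowerTriangular := fun i j hij => by simpa using hlowℚ hij
  obtain ⟨hu₀₃, hu₁₂⟩ := hlow.mul_diag_eq_one_of_transpose_mul_Jmat_mul hsymp
  rcases hne with hb | hπ
  · have hg₁₁ : (g 1 1 : ℚ) ≠ 0 := by exact_mod_cast left_ne_zero_of_mul_eq_one hu₁₂
    have h := hlowℚ.mul_b_eq_b_mul_of_mul_Nmat_eq_Nmat_mul hcomm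
    rw [map_apply, map_apply, ← Int.eq_of_mul_eq_one hu₁₂, mul_comm b₂] at h
    exact hb (mul_left_cancel₀ hg₁₁ h)
  · obtain ⟨q, hq⟩ := exists_ratCast_eq_sub_of_mulVec_eq ha₂ hlow hu₀₃ hvec
    exact hπ q hq

/-- for two normalized MUM data `(Nᵢ, vᵢ)` with `aᵢ ≠ 0`,
`bᵢ > 0`, `exp(Nᵢ)` integral, and `b₁ ≠ b₂` or `π₁ − π₂ ∉ ℚ`, no integral
symplectic `g` satisfies `g·N₁ = N₂·g` and `g·v₁ = μ·exp(c·N₂)·v₂`. -/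
theorem stmt11 (a₁ b₁ e₁ f₁ a₂ b₂ e₂ f₂ : ℚ) (π₁ π₂ : ℂ)
    (ha₁ : a₁ ≠ 0) (ha₂ : a₂ ≠ 0) (hb₁ : 0 < b₁) (hb₂ : 0 < b₂)
    (hint₁ : ∀ i j : Fin 4, ∃ n : ℤ,
      NormedSpace.exp (Nmat a₁ b₁ e₁ f₁) i j = (n : ℚ))
    (hint₂ : ∀ i j : Fin 4, ∃ n : ℤ,
      NormedSpace.exp (Nmat a₂ b₂ e₂ f₂) i j = (n : ℚ))
    (hne : b₁ ≠ b₂ ∨ ∀ q : ℚ, π₁ - π₂ ≠ (q : ℂ)) :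
    ¬ ∃ (g : Matrix (Fin 4) (Fin 4) ℤ) (c μ : ℂ),
        μ ≠ 0 ∧
        gᵀ * Jmat ℤ * g = Jmat ℤ ∧
        g.map ((↑) : ℤ → ℚ) * Nmat a₁ b₁ e₁ f₁
          = Nmat a₂ b₂ e₂ f₂ * g.map ((↑) : ℤ → ℚ) ∧
        (g.map ((↑) : ℤ → ℂ)).mulVec ![1, 0, ((f₁ / (2 * a₁) : ℚ) : ℂ), π₁]
          = μ • (NormedSpace.exp
              (c • (Nmat a₂ b₂ e₂ f₂).map ((↑) : ℚ → ℂ))).mulVec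
              ![1, 0, ((f₂ / (2 * a₂) : ℚ) : ℂ), π₂] :=
  stmt11_general a₁ b₁ e₁ f₁ a₂ b₂ e₂ f₂ π₁ π₂ ha₁ ha₂ hb₁ hne
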